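/- On a finite tree graph with N ≥ 2 nodes and r > 0, a detailed-balance stationary state is linearly stable if and only if every edge is a dissensus edge (|x*_i − x*_j| = √r for all edges); any stationary state with at least one consensus edge has a Jacobian with a positive eigenvalue. -/

import Mathlib

open Finset Matrix Polynomial
open scoped Classical

/-- Right-hand side of the dynamics `dx_i/dt = Σ_{j~i} (r(x_i-x_j) - (x_i-x_j)^3)`. -/
noncomputable def rhs {N : ℕ} (G : SimpleGraph (Fin N)) (r : ℝ) (x : Fin N → ℝ) (i : Fin N) : ℝ :=
  ∑ j ∈ G.neighborFinset i, (r * (x i - x j) - (x i - x j) ^ 3)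

/-- Graph Laplacian matrix. -/
noncomputable def lap {N : ℕ} (G : SimpleGraph (Fin N)) : Matrix (Fin N) (Fin N) ℝ :=
  fun i j => if i = j then (G.degree i : ℝ) else if G.Adj i j then -1 else 0

/-- Laplacian of the subgraph of consensus edges (edges with `x i = x j`). -/
noncomputable def lapEq {N : ℕ} (G : SimpleGraph (Fin N)) (x : Fin N → ℝ) :
    Matrix (Fin N) (Fin N) ℝ :=
  fun i j => if i = j then (((G.neighborFinset i).filter (fun k => x i = x k)).card : ℝ)
    else if G.Adj i j ∧ x i = x j then -1 else 0

/-- Laplacian of the subgraph of dissensus edges (edges with `x i ≠ x j`). -/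
noncomputable def lapNe {N : ℕ} (G : SimpleGraph (Fin N)) (x : Fin N → ℝ) :
    Matrix (Fin N) (Fin N) ℝ :=
  fun i j => if i = j then (((G.neighborFinset i).filter (fun k => x i ≠ x k)).card : ℝ)
    else if G.Adj i j ∧ x i ≠ x j then -1 else 0

/-- `Qp` is the Moore–Penrose pseudoinverse of `Q`. -/
def IsMP {N : ℕ} (Q Qp : Matrix (Fin N) (Fin N) ℝ) : Prop :=
  Q * Qp * Q = Q ∧ Qp * Q * Qp = Qp ∧ (Q * Qp)ᵀ = Q * Qp ∧ (Qp * Q)ᵀ = Qp * Q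

/-- The indicator difference vector `e_i - e_j`. -/
noncomputable def ev {N : ℕ} (i j : Fin N) : Fin N → ℝ := Pi.single i 1 - Pi.single j 1

/-- Effective resistance `ω_ij = (e_i-e_j)ᵀ Q⁺ (e_i-e_j)` given a pseudoinverse `Qp` of `Q`. -/
noncomputable def effRes {N : ℕ} (Qp : Matrix (Fin N) (Fin N) ℝ) (i j : Fin N) : ℝ :=
  ev i j ⬝ᵥ (Qp *ᵥ ev i j)

/-- A detailed-balance state: every edge difference lies in `{0, √r, -√r}`. -/
def DetailedBalance {N : ℕ} (G : SimpleGraph (Fin N)) (r : ℝ) (x : Fin N → ℝ) : Prop :=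
  ∀ i j, G.Adj i j → (x i - x j = 0 ∨ x i - x j = Real.sqrt r ∨ x i - x j = - Real.sqrt r)

/-- `M` is negative definite on the subspace orthogonal to the constant vector. -/
def NegDefOrth {N : ℕ} (M : Matrix (Fin N) (Fin N) ℝ) : Prop :=
  ∀ z : Fin N → ℝ, z ≠ 0 → ∑ k, z k = 0 → z ⬝ᵥ (M *ᵥ z) < 0

/-- `M` has a positive eigenvalue. -/
def HasPosEig {N : ℕ} (M : Matrix (Fin N) (Fin N) ℝ) : Prop :=
  ∃ (μ : ℝ) (z : Fin N → ℝ), 0 < μ ∧ z ≠ 0 ∧ M *ᵥ z = μ • z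

/-- The Jacobian of the dynamics `rhs` at a state `x`, defined entrywise via partial
derivatives. -/
noncomputable def jac {N : ℕ} (G : SimpleGraph (Fin N)) (r : ℝ) (x : Fin N → ℝ) :
    Matrix (Fin N) (Fin N) ℝ :=
  fun i j => deriv (fun t => rhs G r (Function.update x j t) i) (x j)

/-- The solution `α(t) = α₀ (α₀² - (α₀²-1) e^{-2μrt})^{-1/2}` of the Bernoulli ODE. -/
noncomputable def alph (a0 mu r : ℝ) (t : ℝ) : ℝ :=
  a0 / Real.sqrt (a0 ^ 2 - (a0 ^ 2 - 1) * Real.exp (-(2 * mu * r * t)))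

/-! On a tree every edge `ij` is a bridge, so the indicator `z` of the component of `i` in
`G - ij` is constant across every other edge. If `ij` is a consensus edge, then
`zᵀ Q₌ z > 0 = zᵀ Q≠ z`, so the symmetric matrix `r (Q₌ - 2 Q≠)` has a positive eigenvalue;
as the matrix kills the constant vector, that eigenvector has zero sum and witnesses
instability. If every edge is a dissensus edge, then `Q₌ = 0` and `Q≠` is the Laplacian of the
connected tree, which is positive definite on zero-sum vectors. -/

namespace SimpleGraph

variable {V : Type*}

section Laplacian

variable [Fintype V] [DecidableEq V] (G : SimpleGraph V) [DecidableRel G.Adj]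

theorem dotProduct_lapMatrix_mulVec_eq_zero_iff (z : V → ℝ) :
    z ⬝ᵥ (G.lapMatrix ℝ *ᵥ z) = 0 ↔ ∀ i j, G.Adj i j → z i = z j := by
  rw [← toLinearMap₂'_apply', lapMatrix_toLinearMap₂'_apply'_eq_zero_iff_forall_adj]

theorem dotProduct_lapMatrix_mulVec_nonneg (z : V → ℝ) : 0 ≤ z ⬝ᵥ (G.lapMatrix ℝ *ᵥ z) := by
  simpa using (posSemidef_lapMatrix ℝ G).dotProduct_mulVec_nonneg z

theorem dotProduct_lapMatrix_mulVec_pos_iff (z : V → ℝ) :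
    0 < z ⬝ᵥ (G.lapMatrix ℝ *ᵥ z) ↔ ∃ i j, G.Adj i j ∧ z i ≠ z j := by
  rw [(G.dotProduct_lapMatrix_mulVec_nonneg z).lt_iff_ne', Ne,
    dotProduct_lapMatrix_mulVec_eq_zero_iff]
  push Not
  rfl

theorem Connected.dotProduct_lapMatrix_mulVec_pos {G : SimpleGraph V} [DecidableRel G.Adj]
    (hG : G.Connected) {z : V → ℝ} (hz : z ≠ 0) (hsum : ∑ k, z k = 0) :
    0 < z ⬝ᵥ (G.lapMatrix ℝ *ᵥ z) := by
  refine (G.dotProduct_lapMatrix_mulVec_nonneg z).lt_of_ne' fun h => hz ?_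
  rw [← toLinearMap₂'_apply', lapMatrix_toLinearMap₂'_apply'_eq_zero_iff_forall_reachable] at h
  have := hG.nonempty
  have hconst : ∀ k, z k = z hG.nonempty.some := fun k => h _ _ (hG.preconnected _ _)
  have hcard : (Fintype.card V : ℝ) ≠ 0 := Nat.cast_ne_zero.mpr Fintype.card_ne_zero
  rw [Finset.sum_congr rfl fun k _ => hconst k, Finset.sum_const, Finset.card_univ,
    nsmul_eq_mul, mul_eq_zero, or_iff_right hcard] at hsum
  exact funext fun k => (hconst k).trans hsum

end Laplacian

theorem IsBridge.exists_ne_and_forall_adj_eq {G : SimpleGraph V} {i j : V}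
    (h : G.IsBridge s(i, j)) :
    ∃ z : V → ℝ, z i ≠ z j ∧ ∀ a b, G.Adj a b → s(a, b) ≠ s(i, j) → z a = z b := by
  classical
  let H := G.deleteEdges {s(i, j)}
  refine ⟨fun k => if H.Reachable k i then 1 else 0, ?_, fun a b hab hne => ?_⟩
  · simp only [Reachable.refl, if_true, if_neg fun hji : H.Reachable j i => h hji.symm]
    exact one_ne_zero
  · have hadj : H.Adj a b := (deleteEdges_adj ..).mpr ⟨hab, hne⟩
    exact if_congr ⟨hadj.symm.reachable.trans, hadj.reachable.trans⟩ rfl rfl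

end SimpleGraph

section Consensus

variable {V α : Type*} (G : SimpleGraph V) (x : V → α)

@[simps]
def consensusGraph : SimpleGraph V where
  Adj a b := G.Adj a b ∧ x a = x b
  symm := ⟨fun _ _ h => ⟨h.1.symm, h.2.symm⟩⟩
  loopless := ⟨fun _ h => G.irrefl h.1⟩

@[simps]
def dissensusGraph : SimpleGraph V where
  Adj a b := G.Adj a b ∧ x a ≠ x b
  symm := ⟨fun _ _ h => ⟨h.1.symm, h.2.symm⟩⟩
  loopless := ⟨fun _ h => G.irrefl h.1⟩

theorem dissensusGraph_eq_self (h : ∀ a b, G.Adj a b → x a ≠ x b) : dissensusGraph G x = G := by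
  ext a b
  exact ⟨And.left, fun hab => ⟨hab, h a b hab⟩⟩

end Consensus

section ConsensusLaplacians

variable {N : ℕ} (G : SimpleGraph (Fin N)) (x : Fin N → ℝ)

theorem lapEq_eq_lapMatrix : lapEq G x = (consensusGraph G x).lapMatrix ℝ := by
  have hnbr (a) :
      (consensusGraph G x).neighborFinset a = (G.neighborFinset a).filter (x a = x ·) := by
    ext k
    simp
  ext a b
  rcases eq_or_ne a b with rfl | hab
  · simp [lapEq, SimpleGraph.lapMatrix, SimpleGraph.degMatrix,
      ← SimpleGraph.card_neighborFinset_eq_degree, hnbr]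
  · simp [lapEq, SimpleGraph.lapMatrix, SimpleGraph.degMatrix, SimpleGraph.adjMatrix_apply, hab,
      apply_ite]

theorem lapNe_eq_lapMatrix : lapNe G x = (dissensusGraph G x).lapMatrix ℝ := by
  have hnbr (a) :
      (dissensusGraph G x).neighborFinset a = (G.neighborFinset a).filter (x a ≠ x ·) := by
    ext k
    simp
  ext a b
  rcases eq_or_ne a b with rfl | hab
  · simp [lapNe, SimpleGraph.lapMatrix, SimpleGraph.degMatrix,
      ← SimpleGraph.card_neighborFinset_eq_degree, hnbr]
  · simp [lapNe, SimpleGraph.lapMatrix, SimpleGraph.degMatrix, SimpleGraph.adjMatrix_apply, hab,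
      apply_ite]

end ConsensusLaplacians

section Spectrum

variable {N : ℕ} {M : Matrix (Fin N) (Fin N) ℝ}

theorem hasPosEig_of_dotProduct_mulVec_pos (hM : M.IsSymm)
    {z : Fin N → ℝ} (hz : 0 < z ⬝ᵥ (M *ᵥ z)) : HasPosEig M := by
  have hherm : (-M).IsHermitian := by
    rw [IsHermitian, conjTranspose_eq_transpose_of_trivial, transpose_neg, hM.eq]
  obtain ⟨k, hk⟩ : ∃ k, hherm.eigenvalues k < 0 := by
    by_contra! hall
    have := (hherm.posSemidef_iff_eigenvalues_nonneg.mpr hall).dotProduct_mulVec_nonneg z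
    simp only [star_trivial, neg_mulVec, dotProduct_neg] at this
    linarith
  refine ⟨-hherm.eigenvalues k, hherm.eigenvectorBasis k, neg_pos.mpr hk, ?_, ?_⟩
  · exact fun h => hherm.eigenvectorBasis.orthonormal.ne_zero k (by simpa using h)
  · have := hherm.mulVec_eigenvectorBasis k
    rwa [neg_mulVec, neg_eq_iff_eq_neg, ← neg_smul] at this

theorem not_negDefOrth_of_hasPosEig (hM : M.IsSymm)
    (hconst : M *ᵥ (fun _ => 1) = 0) (hpos : HasPosEig M) : ¬ NegDefOrth M := by
  obtain ⟨μ, z, hμ, hz, hMz⟩ := hpos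
  have hsum : ∑ k, z k = 0 := by
    have h : μ * ((fun _ => 1) ⬝ᵥ z) = 0 := by
      rw [← smul_eq_mul, ← dotProduct_smul, ← hMz, dotProduct_mulVec, ← mulVec_transpose, hM.eq,
        hconst, zero_dotProduct]
    simpa [dotProduct, hμ.ne'] using h
  intro hneg
  have := hneg z hz hsum
  rw [hMz, dotProduct_smul, smul_eq_mul] at this
  exact (mul_nonneg hμ.le (dotProduct_self_star_nonneg z)).not_gt this

end Spectrum

section Stability

variable {V : Type*} [Fintype V] [DecidableEq V] (C D : SimpleGraph V) [DecidableRel C.Adj]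
  [DecidableRel D.Adj] (r : ℝ)

theorem isSymm_smul_lapMatrix_sub_two_smul_lapMatrix :
    (r • (C.lapMatrix ℝ - (2 : ℝ) • D.lapMatrix ℝ)).IsSymm :=
  ((C.isSymm_lapMatrix ℝ).sub ((D.isSymm_lapMatrix ℝ).smul 2)).smul r

theorem smul_lapMatrix_sub_two_smul_lapMatrix_mulVec_const :
    (r • (C.lapMatrix ℝ - (2 : ℝ) • D.lapMatrix ℝ)) *ᵥ (fun _ => 1) = 0 := by
  simp [smul_mulVec, sub_mulVec, SimpleGraph.lapMatrix_mulVec_const_eq_zero]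

theorem dotProduct_smul_lapMatrix_sub_two_smul_lapMatrix_mulVec (z : V → ℝ) :
    z ⬝ᵥ ((r • (C.lapMatrix ℝ - (2 : ℝ) • D.lapMatrix ℝ)) *ᵥ z)
      = r * (z ⬝ᵥ (C.lapMatrix ℝ *ᵥ z) - 2 * z ⬝ᵥ (D.lapMatrix ℝ *ᵥ z)) := by
  simp only [smul_mulVec, sub_mulVec, dotProduct_smul, dotProduct_sub, smul_eq_mul]

end Stability

theorem exists_consensus_form_pos_and_dissensus_form_eq_zero {V : Type*} [Fintype V] [DecidableEq V]
    {G : SimpleGraph V} (x : V → ℝ) {i j : V} (hij : G.Adj i j) (hbr : G.IsBridge s(i, j))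
    (hx : x i = x j) :
    ∃ z : V → ℝ, 0 < z ⬝ᵥ ((consensusGraph G x).lapMatrix ℝ *ᵥ z) ∧
      z ⬝ᵥ ((dissensusGraph G x).lapMatrix ℝ *ᵥ z) = 0 := by
  obtain ⟨z, hzij, hz⟩ := hbr.exists_ne_and_forall_adj_eq
  refine ⟨z, (SimpleGraph.dotProduct_lapMatrix_mulVec_pos_iff _ z).mpr ⟨i, j, ⟨hij, hx⟩, hzij⟩,
    (SimpleGraph.dotProduct_lapMatrix_mulVec_eq_zero_iff _ z).mpr fun a b hab => ?_⟩
  refine hz a b hab.1 fun he => hab.2 ?_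
  rcases Sym2.eq_iff.mp he with ⟨rfl, rfl⟩ | ⟨rfl, rfl⟩
  exacts [hx, hx.symm]

theorem stmt_15_general {N : ℕ} (G : SimpleGraph (Fin N)) (hT : G.IsTree)
    (r : ℝ) (hr : 0 < r) (x : Fin N → ℝ) :
    (NegDefOrth (r • (lapEq G x - (2 : ℝ) • lapNe G x)) ↔
      ∀ i j, G.Adj i j → x i ≠ x j) ∧
    ((∃ i j, G.Adj i j ∧ x i = x j) →
      HasPosEig (r • (lapEq G x - (2 : ℝ) • lapNe G x))) := by
  rw [lapEq_eq_lapMatrix, lapNe_eq_lapMatrix]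
  set C := consensusGraph G x
  set D := dissensusGraph G x
  have hsymm := isSymm_smul_lapMatrix_sub_two_smul_lapMatrix C D r
  have unstable : (∃ i j, G.Adj i j ∧ x i = x j) →
      HasPosEig (r • (C.lapMatrix ℝ - (2 : ℝ) • D.lapMatrix ℝ)) := by
    rintro ⟨i, j, hij, hxij⟩
    have hbr := SimpleGraph.isAcyclic_iff_forall_adj_isBridge.mp hT.isAcyclic hij
    obtain ⟨z, hC, hD⟩ := exists_consensus_form_pos_and_dissensus_form_eq_zero x hij hbr hxij
    refine hasPosEig_of_dotProduct_mulVec_pos hsymm (z := z) ?_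
    rw [dotProduct_smul_lapMatrix_sub_two_smul_lapMatrix_mulVec, hD, mul_zero, sub_zero]
    exact mul_pos hr hC
  refine ⟨⟨fun hneg i j hij hxij => not_negDefOrth_of_hasPosEig hsymm
    (smul_lapMatrix_sub_two_smul_lapMatrix_mulVec_const C D r) (unstable ⟨i, j, hij, hxij⟩) hneg,
    fun hdis z hz hsum => ?_⟩, unstable⟩
  have hC : z ⬝ᵥ (C.lapMatrix ℝ *ᵥ z) = 0 :=
    (C.dotProduct_lapMatrix_mulVec_eq_zero_iff z).mpr fun a b hab => absurd hab.2 (hdis a b hab.1)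
  have hD : 0 < z ⬝ᵥ (D.lapMatrix ℝ *ᵥ z) := by
    rw [show D = G from dissensusGraph_eq_self G x hdis]
    exact hT.connected.dotProduct_lapMatrix_mulVec_pos hz hsum
  rw [dotProduct_smul_lapMatrix_sub_two_smul_lapMatrix_mulVec, hC]
  exact mul_neg_of_pos_of_neg hr (by linarith)

/-- on a tree (`N ≥ 2`), a detailed-balance stationary state is linearly
stable iff all edges are dissensus edges; any consensus edge yields a positive eigenvalue
of the Jacobian. -/
theorem stmt_15 {N : ℕ} (hN : 2 ≤ N) (G : SimpleGraph (Fin N)) (hT : G.IsTree)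
    (r : ℝ) (hr : 0 < r) (x : Fin N → ℝ) (hx : DetailedBalance G r x) :
    (NegDefOrth (r • (lapEq G x - (2 : ℝ) • lapNe G x)) ↔
      ∀ i j, G.Adj i j → x i ≠ x j) ∧
    ((∃ i j, G.Adj i j ∧ x i = x j) →
      HasPosEig (r • (lapEq G x - (2 : ℝ) • lapNe G x))) :=
  stmt_15_general G hT r hr x
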